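/- Let δ > 0 and let s, y ∈ ℝ^{n×r} with s ≠ 0. Define β := 1 if tr(sᵀy) ≥ 0.25 δ‖s‖², and β := 0.75 δ‖s‖² / (δ‖s‖² − tr(sᵀy)) otherwise, and set ȳ := βy + (1−β)δs. Then β ∈ (0,1], tr(sᵀȳ) = max{0.25 δ‖s‖², tr(sᵀy)} (in particular tr(sᵀȳ) ≥ 0.25 δ‖s‖² > 0), and ‖ȳ‖ ≤ β‖y‖ + (1−β)δ‖s‖ ≤ ‖y‖ + δ‖s‖. -/

import Mathlib

open Matrix

/-! Since `tr(sᵀȳ) = β tr(sᵀy) + (1 - β) δ‖s‖²` is affine in `β`, when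
`tr(sᵀy) < δ‖s‖²/4` the prescribed `β` is exactly the one making it `δ‖s‖²/4`; the norm bound is
the triangle inequality. -/

/-- The trace inner product `⟨A, B⟩ = tr(AᵀB)` on `ℝ^{n×r}`. -/
noncomputable def tinner {n r : ℕ} (A B : Matrix (Fin n) (Fin r) ℝ) : ℝ := (Aᵀ * B).trace

-- The norm `‖·‖` below is the Frobenius norm, associated to the trace inner product.
attribute [local instance] Matrix.frobeniusNormedAddCommGroup Matrix.frobeniusNormedSpace

section Damping

variable {q t β : ℝ}

lemma damping_pos_and_le_one (hq : 0 < q)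
    (hβ : β = if 0.25 * q ≤ t then 1 else 0.75 * q / (q - t)) : 0 < β ∧ β ≤ 1 := by
  subst hβ
  split_ifs with h
  · norm_num
  · have hqt : 0 < q - t := by linarith
    exact ⟨by positivity, (div_le_one hqt).2 (by linarith)⟩

lemma damping_combination_eq_max (hq : 0 < q)
    (hβ : β = if 0.25 * q ≤ t then 1 else 0.75 * q / (q - t)) :
    β * t + (1 - β) * q = max (0.25 * q) t := by
  subst hβ
  split_ifs with h
  · simp [max_eq_right h]
  · have hqt : q - t ≠ 0 := by linarith
    rw [max_eq_left (not_le.1 h).le]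
    field_simp
    ring

end Damping

lemma norm_smul_add_smul_le {E : Type*} [SeminormedAddCommGroup E] [NormedSpace ℝ E]
    {a b : ℝ} (ha : 0 ≤ a) (hb : 0 ≤ b) (x y : E) :
    ‖a • x + b • y‖ ≤ a * ‖x‖ + b * ‖y‖ :=
  (norm_add_le _ _).trans_eq <| by rw [norm_smul_of_nonneg ha, norm_smul_of_nonneg hb]

section TraceInner

variable {n r : ℕ}

lemma tinner_add_right (A B C : Matrix (Fin n) (Fin r) ℝ) :
    tinner A (B + C) = tinner A B + tinner A C := by
  simp only [tinner, Matrix.mul_add, trace_add]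

lemma tinner_smul_right (A B : Matrix (Fin n) (Fin r) ℝ) (c : ℝ) :
    tinner A (c • B) = c * tinner A B := by
  simp only [tinner, Matrix.mul_smul, trace_smul, smul_eq_mul]

lemma tinner_self (A : Matrix (Fin n) (Fin r) ℝ) : tinner A A = ‖A‖ ^ 2 := by
  have hnorm : ‖A‖ ^ 2 = ∑ i, ∑ j, A i j ^ 2 := by
    rw [frobenius_norm_def, ← Real.rpow_natCast, ← Real.rpow_mul (by positivity)]
    norm_num [Real.rpow_two]
  rw [hnorm, tinner, trace, Finset.sum_comm]
  simp only [diag, mul_apply, transpose_apply, sq]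

end TraceInner

theorem stmt6 {n r : ℕ} (δ : ℝ) (hδ : 0 < δ)
    (s y : Matrix (Fin n) (Fin r) ℝ) (hs : s ≠ 0)
    -- the damping coefficient β
    (β : ℝ)
    (hβ : β = if 0.25 * δ * ‖s‖ ^ 2 ≤ tinner s y then 1
              else 0.75 * δ * ‖s‖ ^ 2 / (δ * ‖s‖ ^ 2 - tinner s y))
    -- the damped vector `ȳ := βy + (1-β)·δs`  (here `H₀⁻¹s = δs`)
    (ybar : Matrix (Fin n) (Fin r) ℝ) (hybar : ybar = β • y + (1 - β) • δ • s) :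
    (0 < β ∧ β ≤ 1) ∧
      (tinner s ybar = max (0.25 * δ * ‖s‖ ^ 2) (tinner s y) ∧
        0.25 * δ * ‖s‖ ^ 2 ≤ tinner s ybar ∧ 0 < 0.25 * δ * ‖s‖ ^ 2) ∧
      (‖ybar‖ ≤ β * ‖y‖ + (1 - β) * (δ * ‖s‖) ∧
        β * ‖y‖ + (1 - β) * (δ * ‖s‖) ≤ ‖y‖ + δ * ‖s‖) := by
  have hq : 0 < δ * ‖s‖ ^ 2 := by have := norm_pos_iff.2 hs; positivity
  simp_rw [mul_assoc] at hβ ⊢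
  obtain ⟨hβ0, hβ1⟩ := damping_pos_and_le_one hq hβ
  have hcurv : tinner s ybar = max (0.25 * (δ * ‖s‖ ^ 2)) (tinner s y) := by
    rw [hybar, tinner_add_right, tinner_smul_right, tinner_smul_right, tinner_smul_right,
      tinner_self, ← damping_combination_eq_max hq hβ]
  refine ⟨⟨hβ0, hβ1⟩, ⟨hcurv, hcurv ▸ le_max_left _ _, by positivity⟩, ?_, ?_⟩
  · rw [hybar, ← norm_smul_of_nonneg hδ.le]
    exact norm_smul_add_smul_le hβ0.le (sub_nonneg.2 hβ1) _ _
  · exact add_le_add (mul_le_of_le_one_left (norm_nonneg _) hβ1)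
      (mul_le_of_le_one_left (by positivity) (by linarith))
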